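/- Under the assumptions of the modified Euler lemma, for all step sizes Δ small enough that (ΔK/K₁)(e^{K₁mT} − 1) + ΔK₃ < η (where K = K₂ + 2K₁K₃ and η is the positive separation between the trajectory and the complements of the sets 𝒜(t)), one has ‖θ_i − θ(iΔ)‖ ≤ (ΔK/K₁)(e^{K₁mT} − 1) for every i ∈ {1, …, ⌊T/Δ⌋}. -/
import Mathlib


open Set

/-- The Euclidean norm of a vector in `Fin m → ℝ`. -/
noncomputable def eNorm {m : ℕ} (v : Fin m → ℝ) : ℝ := Real.sqrt (∑ j, (v j) ^ 2)

lemma eNorm_eq_norm {m : ℕ} (v : Fin m → ℝ) :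
    eNorm v = ‖(EuclideanSpace.equiv (Fin m) ℝ).symm v‖ := by
  rw [EuclideanSpace.norm_eq]
  simp [eNorm, Real.norm_eq_abs, sq_abs]

lemma eNorm_nonneg {m : ℕ} (v : Fin m → ℝ) : 0 ≤ eNorm v := Real.sqrt_nonneg _

lemma abs_le_eNorm {m : ℕ} (v : Fin m → ℝ) (j : Fin m) : |v j| ≤ eNorm v := by
  rw [eNorm, ← Real.sqrt_sq_eq_abs]
  exact Real.sqrt_le_sqrt (Finset.single_le_sum (f := fun l => (v l)^2)
    (fun l _ => sq_nonneg _) (Finset.mem_univ j))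

lemma eNorm_add_le {m : ℕ} (x y : Fin m → ℝ) :
    eNorm (fun l => x l + y l) ≤ eNorm x + eNorm y := by
  rw [eNorm_eq_norm, eNorm_eq_norm, eNorm_eq_norm]
  exact norm_add_le ((EuclideanSpace.equiv (Fin m) ℝ).symm x) ((EuclideanSpace.equiv (Fin m) ℝ).symm y)

lemma eNorm_sub_comm {m : ℕ} (x y : Fin m → ℝ) :
    eNorm (fun l => x l - y l) = eNorm (fun l => y l - x l) := by
  unfold eNorm
  congr 1
  apply Finset.sum_congr rfl
  intro l _
  ring

lemma eNorm_mono_if {m : ℕ} (x : Fin m → ℝ) (p : Fin m → Prop) [DecidablePred p] :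
    eNorm (fun l => if p l then x l else 0) ≤ eNorm x := by
  apply Real.sqrt_le_sqrt
  apply Finset.sum_le_sum
  intro l _
  by_cases h : p l <;> simp [h, sq_nonneg]

lemma eNorm_single {m : ℕ} (j : Fin m) (c : ℝ) :
    eNorm (fun l => if l = j then c else 0) = |c| := by
  rw [eNorm]
  have : ∑ l, (if l = j then c else 0) ^ 2 = c ^ 2 := by
    rw [Finset.sum_eq_single j] <;> simp +contextual
  rw [this, Real.sqrt_sq_eq_abs]

/-- explicit global error bound for the coordinate-sequential Euler
method, for all sufficiently small step sizes Δ. -/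
theorem modified_euler_explicit_bound (m : ℕ) (hm : 0 < m) (T : ℝ) (hT : 0 < T)
    (F : (Fin m → ℝ) → ℝ → (Fin m → ℝ)) (θ : ℝ → (Fin m → ℝ))
    (𝒜 : ℝ → Set (Fin m → ℝ)) (η K₁ K₂ K₃ : ℝ) (hη : 0 < η) (hK₁pos : 0 < K₁)
    (hODE : ∀ t ∈ Icc (0 : ℝ) T, ∀ j : Fin m,
      HasDerivAt (fun s => θ s j) (F (θ t) t j) t)
    (hsep : ∀ t ∈ Icc (0 : ℝ) T, ∀ v : Fin m → ℝ, v ∉ 𝒜 t →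
      η ≤ eNorm (fun j => θ t j - v j))
    (hK₁ : ∀ t ∈ Icc (0 : ℝ) T, ∀ u ∈ 𝒜 t, ∀ v ∈ 𝒜 t, ∀ j : Fin m,
      |F u t j - F v t j| ≤ K₁ * eNorm (fun l => u l - v l))
    (hK₂ : ∀ t ∈ Icc (0 : ℝ) T, ∀ v ∈ 𝒜 t, ∀ j : Fin m,
      ∃ d : ℝ, HasDerivAt (fun s => F v s j) d t ∧ |d| ≤ K₂)
    (hK₃ : ∀ t ∈ Icc (0 : ℝ) T, ∀ v ∈ 𝒜 t, eNorm (F v t) ≤ K₃)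
    (Δ : ℝ) (hΔ : 0 < Δ)
    -- Δ small enough: (ΔK/K₁)(e^{K₁mT} − 1) + ΔK₃ < η with K = K₂ + 2K₁K₃
    (hΔsmall : (Δ * (K₂ + 2 * K₁ * K₃) / K₁) * (Real.exp (K₁ * m * T) - 1)
        + Δ * K₃ < η)
    (seq : ℕ → (Fin m → ℝ)) (hinit : seq 0 = θ 0)
    (hupdate : ∀ i : ℕ, ∀ j : Fin m,
      seq (i + 1) j = seq i j +
        Δ * F (fun l => if (l : ℕ) < (j : ℕ) then seq (i + 1) l else seq i l)
          (i * Δ) j) :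
    ∀ i : ℕ, 1 ≤ i → i ≤ Nat.floor (T / Δ) →
      eNorm (fun j => seq i j - θ (i * Δ) j)
        ≤ (Δ * (K₂ + 2 * K₁ * K₃) / K₁) * (Real.exp (K₁ * m * T) - 1) := by
  -- notation
  set N := Nat.floor (T / Δ) with hN
  set K : ℝ := K₂ + 2 * K₁ * K₃ with hK
  -- basic positivity facts
  have hθself : ∀ t ∈ Icc (0 : ℝ) T, θ t ∈ 𝒜 t := by
    intro t ht
    by_contra h
    have := hsep t ht (θ t) h
    simp [eNorm] at this
    linarith
  have hK₃0 : 0 ≤ K₃ := le_trans (eNorm_nonneg _) (hK₃ 0 ⟨le_rfl, le_of_lt hT⟩ (θ 0)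
    (hθself 0 ⟨le_rfl, le_of_lt hT⟩))
  have hK₂0 : 0 ≤ K₂ := by
    obtain ⟨d, _, hd⟩ := hK₂ 0 ⟨le_rfl, le_of_lt hT⟩ (θ 0) (hθself 0 ⟨le_rfl, le_of_lt hT⟩) ⟨0, hm⟩
    exact le_trans (abs_nonneg d) hd
  have hK0 : 0 ≤ K := by rw [hK]; positivity
  have hexp1 : 1 ≤ Real.exp (K₁ * m * T) := by
    apply Real.one_le_exp
    positivity
  have hBf0 : 0 ≤ (Δ * K / K₁) * (Real.exp (K₁ * m * T) - 1) := by
    apply mul_nonneg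
    · positivity
    · linarith
  have hΔK₃η : Δ * K₃ < η := by
    calc Δ * K₃ ≤ (Δ * K / K₁) * (Real.exp (K₁ * m * T) - 1) + Δ * K₃ := by linarith
    _ < η := hΔsmall
  have hmem : ∀ t ∈ Icc (0 : ℝ) T, ∀ v : Fin m → ℝ,
      eNorm (fun j => θ t j - v j) < η → v ∈ 𝒜 t := by
    intro t ht v hv
    by_contra h
    exact absurd (hsep t ht v h) (not_le.mpr hv)
  have hNT : (N : ℝ) * Δ ≤ T := by
    rw [hN]
    have := Nat.floor_le (a := T / Δ) (by positivity)
    calc (Nat.floor (T / Δ) : ℝ) * Δ ≤ (T / Δ) * Δ := by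
          apply mul_le_mul_of_nonneg_right this (le_of_lt hΔ)
    _ = T := by field_simp
  have htmem : ∀ k : ℕ, k ≤ N → ((k : ℝ) * Δ) ∈ Icc (0 : ℝ) T := by
    intro k hk
    constructor
    · positivity
    · calc (k : ℝ) * Δ ≤ (N : ℝ) * Δ := by
            apply mul_le_mul_of_nonneg_right _ (le_of_lt hΔ)
            exact_mod_cast hk
      _ ≤ T := hNT
  -- Lipschitz continuity of θ with respect to the Euclidean norm
  have hθLip : ∀ s ∈ Icc (0 : ℝ) T, ∀ t ∈ Icc (0 : ℝ) T,
      eNorm (fun j => θ s j - θ t j) ≤ K₃ * |s - t| := by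
    intro s hs t ht
    set L := (EuclideanSpace.equiv (Fin m) ℝ).symm with hL
    have key : ∀ u ∈ Icc (0 : ℝ) T, HasDerivWithinAt (fun r => L (θ r))
        (L (F (θ u) u)) (Icc (0 : ℝ) T) u := by
      intro u hu
      have h1 : HasDerivAt θ (F (θ u) u) u := hasDerivAt_pi.mpr (hODE u hu)
      exact (L.hasFDerivAt.comp_hasDerivAt u h1).hasDerivWithinAt
    have bound : ∀ u ∈ Icc (0 : ℝ) T, ‖L (F (θ u) u)‖ ≤ K₃ := by
      intro u hu
      rw [← eNorm_eq_norm]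
      exact hK₃ u hu (θ u) (hθself u hu)
    have := Convex.norm_image_sub_le_of_norm_hasDerivWithin_le key bound (convex_Icc 0 T) ht hs
    calc eNorm (fun j => θ s j - θ t j) = ‖L (θ s) - L (θ t)‖ := by
          rw [eNorm_eq_norm]; congr 1
    _ ≤ K₃ * ‖s - t‖ := this
    _ = K₃ * |s - t| := by rw [Real.norm_eq_abs]
  have hnear : ∀ t ∈ Icc (0 : ℝ) T, ∀ s ∈ Icc (0 : ℝ) T, |s - t| ≤ Δ → θ s ∈ 𝒜 t := by
    intro t ht s hs hst
    apply hmem t ht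
    calc eNorm (fun j => θ t j - θ s j) ≤ K₃ * |t - s| := hθLip t ht s hs
    _ ≤ K₃ * Δ := by
        apply mul_le_mul_of_nonneg_left _ hK₃0
        rw [abs_sub_comm]; exact hst
    _ < η := by rw [mul_comm]; exact hΔK₃η
  -- choose derivatives in time for F
  choose! d hd hdb using hK₂
  -- time regularity of F
  have hFt : ∀ a ∈ Icc (0 : ℝ) T, ∀ s ∈ Icc (0 : ℝ) T, a ≤ s → s - a ≤ Δ → ∀ j : Fin m,
      |F (θ a) s j - F (θ a) a j| ≤ K₂ * (s - a) := by
    intro a ha s hs has hsa j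
    have hsub : Icc a s ⊆ Icc (0 : ℝ) T := Icc_subset_Icc ha.1 hs.2
    have key : ∀ u ∈ Icc a s, HasDerivWithinAt (fun r => F (θ a) r j)
        (d u (θ a) j) (Icc a s) u := by
      intro u hu
      have hu' := hsub hu
      have hmem' : θ a ∈ 𝒜 u := by
        apply hnear u hu' a ha
        rw [abs_sub_comm, abs_of_nonneg (by linarith [hu.1])]
        linarith [hu.2]
      exact (hd u hu' (θ a) hmem' j).hasDerivWithinAt
    have bound : ∀ u ∈ Icc a s, ‖d u (θ a) j‖ ≤ K₂ := by
      intro u hu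
      have hu' := hsub hu
      have hmem' : θ a ∈ 𝒜 u := by
        apply hnear u hu' a ha
        rw [abs_sub_comm, abs_of_nonneg (by linarith [hu.1])]
        linarith [hu.2]
      exact hdb u hu' (θ a) hmem' j
    have h' := Convex.norm_image_sub_le_of_norm_hasDerivWithin_le key bound (convex_Icc a s)
      (left_mem_Icc.mpr has) (right_mem_Icc.mpr has)
    have hna : ‖s - a‖ = s - a := by
      rw [Real.norm_eq_abs, abs_of_nonneg (by linarith)]
    rw [hna, Real.norm_eq_abs] at h'
    exact h'
  -- truncation error estimate
  have htrunc : ∀ k : ℕ, k + 1 ≤ N → ∀ j : Fin m,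
      |θ ((k : ℝ) * Δ + Δ) j - θ ((k : ℝ) * Δ) j - Δ * F (θ ((k : ℝ) * Δ)) ((k : ℝ) * Δ) j|
        ≤ Δ ^ 2 * (K₂ + K₁ * K₃) := by
    intro k hk j
    set a : ℝ := (k : ℝ) * Δ with ha'
    set b : ℝ := (k : ℝ) * Δ + Δ with hb'
    have ha : a ∈ Icc (0 : ℝ) T := htmem k (le_trans (Nat.le_succ k) hk)
    have hb : b ∈ Icc (0 : ℝ) T := by
      have h2 := htmem (k + 1) hk
      have h3 : ((k + 1 : ℕ) : ℝ) * Δ = b := by rw [hb']; push_cast; ring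
      rwa [h3] at h2
    have hab : a ≤ b := by rw [hb']; linarith
    have hsub : Icc a b ⊆ Icc (0 : ℝ) T := Icc_subset_Icc ha.1 hb.2
    have key : ∀ s ∈ Icc a b, HasDerivWithinAt (fun r => θ r j - r * F (θ a) a j)
        (F (θ s) s j - F (θ a) a j) (Icc a b) s := by
      intro s hs
      exact ((hODE s (hsub hs) j).sub (hasDerivAt_mul_const (F (θ a) a j))).hasDerivWithinAt
    have bound : ∀ s ∈ Icc a b, ‖F (θ s) s j - F (θ a) a j‖ ≤ Δ * (K₂ + K₁ * K₃) := by
      intro s hs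
      have hs' := hsub hs
      have hsa : s - a ≤ Δ := by rw [hb'] at hs; linarith [hs.2]
      have hsa0 : 0 ≤ s - a := by linarith [hs.1]
      have hθa_mem : θ a ∈ 𝒜 s := hnear s hs' a ha (by rwa [abs_sub_comm, abs_of_nonneg hsa0])
      have h1 : |F (θ s) s j - F (θ a) s j| ≤ K₁ * (K₃ * Δ) := by
        calc |F (θ s) s j - F (θ a) s j| ≤ K₁ * eNorm (fun l => θ s l - θ a l) :=
              hK₁ s hs' (θ s) (hθself s hs') (θ a) hθa_mem j
        _ ≤ K₁ * (K₃ * Δ) := by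
            apply mul_le_mul_of_nonneg_left _ (le_of_lt hK₁pos)
            calc eNorm (fun l => θ s l - θ a l) ≤ K₃ * |s - a| := hθLip s hs' a ha
            _ ≤ K₃ * Δ := by
                apply mul_le_mul_of_nonneg_left _ hK₃0
                rwa [abs_of_nonneg hsa0]
      have h2 : |F (θ a) s j - F (θ a) a j| ≤ K₂ * (s - a) :=
        hFt a ha s hs' (by linarith) hsa j
      rw [Real.norm_eq_abs]
      calc |F (θ s) s j - F (θ a) a j|
          ≤ |F (θ s) s j - F (θ a) s j| + |F (θ a) s j - F (θ a) a j| := by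
            have := abs_add_le (F (θ s) s j - F (θ a) s j) (F (θ a) s j - F (θ a) a j)
            simpa using this
      _ ≤ K₁ * (K₃ * Δ) + K₂ * (s - a) := add_le_add h1 h2
      _ ≤ K₁ * (K₃ * Δ) + K₂ * Δ := by nlinarith
      _ = Δ * (K₂ + K₁ * K₃) := by ring
    have := Convex.norm_image_sub_le_of_norm_hasDerivWithin_le key bound (convex_Icc a b)
      (left_mem_Icc.mpr hab) (right_mem_Icc.mpr hab)
    rw [Real.norm_eq_abs, Real.norm_eq_abs] at this
    have hba : b - a = Δ := by rw [hb']; ring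
    have habs : |b - a| = Δ := by rw [hba, abs_of_pos hΔ]
    rw [habs] at this
    calc |θ b j - θ a j - Δ * F (θ a) a j|
        = |θ b j - b * F (θ a) a j - (θ a j - a * F (θ a) a j)| := by
          congr 1; rw [← hba]; ring
    _ ≤ Δ * (K₂ + K₁ * K₃) * Δ := this
    _ = Δ ^ 2 * (K₂ + K₁ * K₃) := by ring
  -- the discrete bound function
  set B : ℕ → ℝ := fun k => (Δ * K / K₁) * ((1 + Δ * K₁) ^ k - 1) with hB
  have hB0 : B 0 = 0 := by simp [hB]
  have hBrec : ∀ k, B (k + 1) = (1 + Δ * K₁) * B k + Δ ^ 2 * K := by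
    intro k
    rw [hB]
    field_simp
    ring
  have hBle : ∀ k : ℕ, k ≤ m * N → B k ≤ (Δ * K / K₁) * (Real.exp (K₁ * m * T) - 1) := by
    intro k hk
    rw [hB]
    apply mul_le_mul_of_nonneg_left _ (by positivity)
    have h1 : (1 + Δ * K₁) ^ k ≤ Real.exp (K₁ * m * T) := by
      calc (1 + Δ * K₁) ^ k ≤ (Real.exp (Δ * K₁)) ^ k := by
            apply pow_le_pow_left₀ (by positivity)
            linarith [Real.add_one_le_exp (Δ * K₁)]
      _ = Real.exp (Δ * K₁ * k) := by
            rw [← Real.exp_nat_mul]; ring_nf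
      _ ≤ Real.exp (K₁ * m * T) := by
            apply Real.exp_le_exp.mpr
            have hkr : (k : ℝ) ≤ (m : ℝ) * N := by exact_mod_cast hk
            have : Δ * (k : ℝ) ≤ (m : ℝ) * T := by
              calc Δ * (k : ℝ) ≤ Δ * ((m : ℝ) * N) := by nlinarith
              _ = (m : ℝ) * ((N : ℝ) * Δ) := by ring
              _ ≤ (m : ℝ) * T := by
                  apply mul_le_mul_of_nonneg_left hNT (by positivity)
            nlinarith
    linarith
  have hBnonneg : ∀ k, 0 ≤ B k := by
    intro k
    rw [hB]
    apply mul_nonneg (by positivity)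
    have : (1:ℝ) ≤ (1 + Δ * K₁) ^ k := one_le_pow₀ (by nlinarith)
    linarith
  -- key micro-step invariant
  have key : ∀ i0 : ℕ, i0 + 1 ≤ N →
      eNorm (fun l => seq i0 l - θ ((i0 : ℝ) * Δ) l) ≤ B (m * i0) →
      ∀ j : ℕ, j ≤ m →
        eNorm (fun l => (if (l : ℕ) < j then seq (i0 + 1) l else seq i0 l)
            - (if (l : ℕ) < j then θ ((i0 : ℝ) * Δ + Δ) l else θ ((i0 : ℝ) * Δ) l))
          ≤ B (m * i0 + j) := by
    intro i0 hi0 he j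
    induction j with
    | zero =>
      intro _
      simpa using he
    | succ j IH =>
      intro hj1
      have hjm : j < m := hj1
      have hD := IH (le_of_lt hjm)
      have ha : ((i0 : ℝ) * Δ) ∈ Icc (0 : ℝ) T := htmem i0 (le_trans (Nat.le_succ i0) hi0)
      have hb : ((i0 : ℝ) * Δ + Δ) ∈ Icc (0 : ℝ) T := by
        have h2 := htmem (i0 + 1) hi0
        have h3 : ((i0 + 1 : ℕ) : ℝ) * Δ = (i0 : ℝ) * Δ + Δ := by push_cast; ring
        rwa [h3] at h2
      set a : ℝ := (i0 : ℝ) * Δ with ha'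
      set v : Fin m → ℝ := fun l : Fin m => if (l : ℕ) < j then seq (i0 + 1) l else seq i0 l with hv
      set w : Fin m → ℝ := fun l : Fin m => if (l : ℕ) < j then θ (a + Δ) l else θ a l with hw
      have jF : Fin m := ⟨j, hjm⟩
      -- distance from w to θ a
      have hwa : eNorm (fun l => w l - θ a l) ≤ K₃ * Δ := by
        have heq : (fun l => w l - θ a l)
            = fun l : Fin m => if (l : ℕ) < j then θ (a + Δ) l - θ a l else 0 := by
          funext l
          by_cases h : (l : ℕ) < j <;> simp [hw, h]
        rw [heq]
        calc eNorm (fun l : Fin m => if (l : ℕ) < j then θ (a + Δ) l - θ a l else 0)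
            ≤ eNorm (fun l => θ (a + Δ) l - θ a l) :=
              eNorm_mono_if _ (fun l : Fin m => (l : ℕ) < j)
        _ ≤ K₃ * |a + Δ - a| := hθLip (a + Δ) hb a ha
        _ = K₃ * Δ := by rw [show a + Δ - a = Δ by ring, abs_of_pos hΔ]
      -- distance from v to θ a
      have hva : eNorm (fun l => θ a l - v l) ≤ B (m * i0 + j) + K₃ * Δ := by
        have heq : (fun l => θ a l - v l)
            = fun l => (v l - w l) * (-1) + (w l - θ a l) * (-1) := by
          funext l; ring
        rw [heq]
        have h4 := eNorm_add_le (fun l => (v l - w l) * (-1)) (fun l => (w l - θ a l) * (-1))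
        have h5 : eNorm (fun l => (v l - w l) * (-1)) = eNorm (fun l => v l - w l) := by
          have : (fun l => (v l - w l) * (-1)) = fun l => w l - v l := by funext l; ring
          rw [this, eNorm_sub_comm]
        have h6 : eNorm (fun l => (w l - θ a l) * (-1)) = eNorm (fun l => w l - θ a l) := by
          have : (fun l => (w l - θ a l) * (-1)) = fun l => θ a l - w l := by funext l; ring
          rw [this, eNorm_sub_comm]
        rw [h5, h6] at h4
        exact h4.trans (add_le_add hD hwa)
      -- bound on B (m * i0 + j)
      have hidx : m * i0 + j ≤ m * N := by
        calc m * i0 + j ≤ m * i0 + m := by omega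
        _ = m * (i0 + 1) := by ring
        _ ≤ m * N := Nat.mul_le_mul_left m hi0
      have hBlt : B (m * i0 + j) + K₃ * Δ < η := by
        have := hBle (m * i0 + j) hidx
        calc B (m * i0 + j) + K₃ * Δ
            ≤ (Δ * K / K₁) * (Real.exp (K₁ * m * T) - 1) + K₃ * Δ := by linarith
        _ = (Δ * K / K₁) * (Real.exp (K₁ * m * T) - 1) + Δ * K₃ := by ring
        _ < η := hΔsmall
      have hvmem : v ∈ 𝒜 a := hmem a ha v (lt_of_le_of_lt hva hBlt)
      -- the update for coordinate j
      have hup : seq (i0 + 1) (⟨j, hjm⟩ : Fin m) = seq i0 (⟨j, hjm⟩ : Fin m)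
          + Δ * F v a (⟨j, hjm⟩ : Fin m) := hupdate i0 ⟨j, hjm⟩
      -- Lipschitz bound
      have hLip : |F v a (⟨j, hjm⟩ : Fin m) - F (θ a) a (⟨j, hjm⟩ : Fin m)|
          ≤ K₁ * (B (m * i0 + j) + K₃ * Δ) := by
        calc |F v a (⟨j, hjm⟩ : Fin m) - F (θ a) a (⟨j, hjm⟩ : Fin m)|
            ≤ K₁ * eNorm (fun l => v l - θ a l) :=
              hK₁ a ha v hvmem (θ a) (hθself a ha) _
        _ ≤ K₁ * (B (m * i0 + j) + K₃ * Δ) := by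
            apply mul_le_mul_of_nonneg_left _ (le_of_lt hK₁pos)
            rw [eNorm_sub_comm]
            exact hva
      -- truncation bound
      have htr : |θ (a + Δ) (⟨j, hjm⟩ : Fin m) - θ a (⟨j, hjm⟩ : Fin m)
          - Δ * F (θ a) a (⟨j, hjm⟩ : Fin m)| ≤ Δ ^ 2 * (K₂ + K₁ * K₃) :=
        htrunc i0 hi0 ⟨j, hjm⟩
      set c : ℝ := Δ * F v a (⟨j, hjm⟩ : Fin m)
        - (θ (a + Δ) (⟨j, hjm⟩ : Fin m) - θ a (⟨j, hjm⟩ : Fin m)) with hc'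
      have hcbound : |c| ≤ Δ * (K₁ * (B (m * i0 + j) + K₃ * Δ)) + Δ ^ 2 * (K₂ + K₁ * K₃) := by
        have heq : c = Δ * (F v a (⟨j, hjm⟩ : Fin m) - F (θ a) a (⟨j, hjm⟩ : Fin m))
            - (θ (a + Δ) (⟨j, hjm⟩ : Fin m) - θ a (⟨j, hjm⟩ : Fin m)
              - Δ * F (θ a) a (⟨j, hjm⟩ : Fin m)) := by rw [hc']; ring
        rw [heq]
        calc |Δ * (F v a (⟨j, hjm⟩ : Fin m) - F (θ a) a (⟨j, hjm⟩ : Fin m))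
              - (θ (a + Δ) (⟨j, hjm⟩ : Fin m) - θ a (⟨j, hjm⟩ : Fin m)
                - Δ * F (θ a) a (⟨j, hjm⟩ : Fin m))|
            ≤ |Δ * (F v a (⟨j, hjm⟩ : Fin m) - F (θ a) a (⟨j, hjm⟩ : Fin m))|
              + |θ (a + Δ) (⟨j, hjm⟩ : Fin m) - θ a (⟨j, hjm⟩ : Fin m)
                - Δ * F (θ a) a (⟨j, hjm⟩ : Fin m)| := abs_sub _ _
        _ ≤ Δ * (K₁ * (B (m * i0 + j) + K₃ * Δ)) + Δ ^ 2 * (K₂ + K₁ * K₃) := by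
            apply add_le_add _ htr
            rw [abs_mul, abs_of_pos hΔ]
            exact mul_le_mul_of_nonneg_left hLip (le_of_lt hΔ)
      -- the new error vector
      have heqstep : (fun l : Fin m => (if (l : ℕ) < j + 1 then seq (i0 + 1) l else seq i0 l)
            - (if (l : ℕ) < j + 1 then θ (a + Δ) l else θ a l))
          = fun l : Fin m => (v l - w l) + (if l = (⟨j, hjm⟩ : Fin m) then c else 0) := by
        funext l
        by_cases h1 : (l : ℕ) < j
        · have h2 : (l : ℕ) < j + 1 := Nat.lt_succ_of_lt h1
          have h3 : l ≠ (⟨j, hjm⟩ : Fin m) := by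
            intro h
            rw [h] at h1
            exact absurd h1 (lt_irrefl j)
          simp [hv, hw, h1, h2, h3]
        · by_cases h2 : (l : ℕ) = j
          · have h3 : l = (⟨j, hjm⟩ : Fin m) := Fin.ext h2
            subst h3
            rw [hup]
            simp [hv, hw, hc', Nat.lt_succ_self j]
            try ring
          · have h4 : ¬ ((l : ℕ) < j + 1) := by omega
            have h5 : l ≠ (⟨j, hjm⟩ : Fin m) := by
              intro h; rw [h] at h2; exact h2 rfl
            simp [hv, hw, h1, h4, h5]
      rw [heqstep]
      have hfin := eNorm_add_le (fun l => v l - w l)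
        (fun l => if l = (⟨j, hjm⟩ : Fin m) then c else 0)
      rw [eNorm_single] at hfin
      have halg : B (m * i0 + j) + (Δ * (K₁ * (B (m * i0 + j) + K₃ * Δ))
          + Δ ^ 2 * (K₂ + K₁ * K₃)) = B (m * i0 + j + 1) := by
        rw [hBrec (m * i0 + j), hK]
        ring
      calc eNorm (fun l => (v l - w l) + (if l = (⟨j, hjm⟩ : Fin m) then c else 0))
          ≤ eNorm (fun l => v l - w l) + |c| := hfin
      _ ≤ B (m * i0 + j) + (Δ * (K₁ * (B (m * i0 + j) + K₃ * Δ))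
            + Δ ^ 2 * (K₂ + K₁ * K₃)) := add_le_add hD hcbound
      _ = B (m * i0 + j + 1) := halg
  -- global induction
  have main : ∀ i0 : ℕ, i0 ≤ N →
      eNorm (fun l => seq i0 l - θ ((i0 : ℝ) * Δ) l) ≤ B (m * i0) := by
    intro i0
    induction i0 with
    | zero =>
      intro _
      have : (fun l => seq 0 l - θ ((0 : ℕ) * Δ) l) = fun _ => (0 : ℝ) := by
        funext l
        simp [hinit]
      rw [this]
      have : eNorm (fun _ : Fin m => (0 : ℝ)) = 0 := by simp [eNorm]
      rw [this]
      rw [Nat.mul_zero, hB0]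
    | succ i0 IH =>
      intro h1
      have hk := key i0 h1 (IH (le_trans (Nat.le_succ _) h1)) m le_rfl
      have heq : (fun l : Fin m => (if (l : ℕ) < m then seq (i0 + 1) l else seq i0 l)
            - (if (l : ℕ) < m then θ ((i0 : ℝ) * Δ + Δ) l else θ ((i0 : ℝ) * Δ) l))
          = fun l => seq (i0 + 1) l - θ ((i0 : ℝ) * Δ + Δ) l := by
        funext l
        simp [l.isLt]
      rw [heq] at hk
      have hcast : ((i0 + 1 : ℕ) : ℝ) * Δ = (i0 : ℝ) * Δ + Δ := by push_cast; ring
      rw [hcast, Nat.mul_succ]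
      exact hk
  intro i hi1 hiN
  exact (main i hiN).trans (hBle (m * i) (Nat.mul_le_mul_left m hiN))
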